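/- Let d, r, γ > 0 with γ > 1. For the symmetric two-variable problem: maximize min{2log(1+dp)+2log(1+rq), 2log(1+dp)+log γ} subject to p+q = P, p,q ≥ 0. If P ≥ (2√γ−1)/r − 1/d and d ≥ r, then the optimal q equals (√γ − 1)/r and the optimal value is 2log(1 + d(P − (√γ−1)/r)) + log γ. -/

import Mathlib

/-- Symmetric saturation: maximizing
`min{2log(1+dp)+2log(1+rq), 2log(1+dp)+log γ}` subject to `p+q = P`, `p,q ≥ 0`,
when `P ≥ (2√γ−1)/r − 1/d` and `d ≥ r`, the optimal `q` is `(√γ−1)/r` and the optimal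
value is `2log(1 + d(P − (√γ−1)/r)) + log γ`. -/
theorem symmetric_saturation_optimal
    (d r γ P : ℝ) (hd : 0 < d) (hr : 0 < r) (hγ : 1 < γ) (hdr : r ≤ d)
    (hP : (2 * Real.sqrt γ - 1) / r - 1 / d ≤ P) :
    (∀ p q : ℝ, 0 ≤ p → 0 ≤ q → p + q = P →
      min (2 * Real.log (1 + d * p) + 2 * Real.log (1 + r * q))
          (2 * Real.log (1 + d * p) + Real.log γ)
        ≤ 2 * Real.log (1 + d * (P - (Real.sqrt γ - 1) / r)) + Real.log γ) ∧
    0 ≤ (Real.sqrt γ - 1) / r ∧ (Real.sqrt γ - 1) / r ≤ P ∧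
    min (2 * Real.log (1 + d * (P - (Real.sqrt γ - 1) / r))
          + 2 * Real.log (1 + r * ((Real.sqrt γ - 1) / r)))
        (2 * Real.log (1 + d * (P - (Real.sqrt γ - 1) / r)) + Real.log γ)
      = 2 * Real.log (1 + d * (P - (Real.sqrt γ - 1) / r)) + Real.log γ := by
  have hγ0 : (0:ℝ) < γ := by linarith
  set s := Real.sqrt γ with hs
  have hs1 : 1 < s := by
    have := Real.lt_sqrt (x := 1) (y := γ) (by norm_num)
    rw [hs]; rw [this]; simpa using hγ
  have hss : s * s = γ := Real.mul_self_sqrt hγ0.le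
  set q0 := (s - 1) / r with hq0
  have hq0nn : 0 ≤ q0 := div_nonneg (by linarith) hr.le
  have hrq0 : 1 + r * q0 = s := by rw [hq0]; field_simp; ring
  have hinv : 1 / d ≤ 1 / r := one_div_le_one_div_of_le hr hdr
  have he : (2 * s - 1) / r = 2 * q0 + 1 / r := by rw [hq0]; field_simp; ring
  have h2q0 : 2 * q0 + (1 / r - 1 / d) ≤ P := by rw [he] at hP; linarith
  have hq0P : q0 ≤ P := by linarith
  have hp0nn : 0 ≤ P - q0 := by linarith
  have hkey : d - r ≤ d * r * (P - 2 * q0) := by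
    have h1 : 1 / r - 1 / d ≤ P - 2 * q0 := by linarith
    have h2 : d * r * (1 / r - 1 / d) = d - r := by field_simp
    nlinarith [mul_pos hd hr]
  have hlogγ : Real.log γ = 2 * Real.log s := by
    rw [← hss, Real.log_mul (by linarith) (by linarith)]; ring
  have hdp0 : (0:ℝ) < 1 + d * (P - q0) := by nlinarith
  refine ⟨?_, hq0nn, hq0P, ?_⟩
  · intro p q hp hq hpq
    have hdp : (0:ℝ) < 1 + d * p := by nlinarith
    have hrq : (0:ℝ) < 1 + r * q := by nlinarith
    rcases le_or_gt q q0 with hc | hc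
    · -- q ≤ q0 : use the first branch
      have hΔ : 0 ≤ q0 - q := by linarith
      have hbr : 0 ≤ r - d + d * r * P - d * r * (q0 + q) := by nlinarith [mul_nonneg (mul_pos hd hr).le hΔ, hkey]
      have hp' : p = P - q := by linarith
      subst hp'
      have hprod : (1 + d * (P - q)) * (1 + r * q) ≤ (1 + d * (P - q0)) * (1 + r * q0) := by
        nlinarith [mul_nonneg hΔ hbr]
      have hlog : Real.log ((1 + d * (P - q)) * (1 + r * q))
          ≤ Real.log ((1 + d * (P - q0)) * (1 + r * q0)) :=
        Real.log_le_log (mul_pos hdp hrq) hprod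
      rw [Real.log_mul hdp.ne' hrq.ne', Real.log_mul hdp0.ne' (by rw [hrq0]; positivity)] at hlog
      have hrq0log : Real.log (1 + r * q0) = Real.log s := by rw [hrq0]
      refine le_trans (min_le_left _ _) ?_
      rw [hlogγ]; linarith
    · -- q0 < q : use the second branch
      have hple : p ≤ P - q0 := by linarith
      have hlog : Real.log (1 + d * p) ≤ Real.log (1 + d * (P - q0)) := by
        refine Real.log_le_log hdp ?_
        have := mul_le_mul_of_nonneg_left hple hd.le
        linarith
      refine le_trans (min_le_right _ _) ?_
      linarith
  · have : 2 * Real.log (1 + r * q0) = Real.log γ := by rw [hrq0, hlogγ]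
    rw [this, min_self]
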